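/- arXiv:2111.08641 — 13 statements merged into one kernel-verified Lean document; each statement's English description precedes it below -/
import Mathlib

section
/- For every prime p and all nonnegative integers n and k with k < p, the binomial coefficient C(pn+k, 2*(pn+k) choose pn+k) satisfies binom(2(pn+k), pn+k) ≡ binom(2n,n) * binom(2k,k) (mod p). That is, the central binomial coefficients A(n) = binom(2n,n) satisfy the Lucas congruence A(pn+k) ≡ A(n)·A(k) (mod p). -/
/-!
By Lucas' theorem, `choose (p * m + a) (p * n + b) ≡ choose m n * choose a b` for base-`p`
digits `a, b < p`. If `2 * k < p`, then `2 * (p * n + k) = p * (2 * n) + 2 * k` has digits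
`2 * n` and `2 * k`, and the congruence follows directly. Otherwise `2 * k = p + r` with `r < k`:
the carry makes the low digit `r` of both `2 * (p * n + k)` and `2 * k` smaller than the low
digit `k`, so both sides vanish modulo `p`.
-/

namespace Choose

variable {p : ℕ} [Fact p.Prime]

theorem choose_mul_add_mul_add_modEq {m n a b : ℕ} (ha : a < p) (hb : b < p) :
    (p * m + a).choose (p * n + b) ≡ m.choose n * a.choose b [ZMOD p] := by
  have hp : 0 < p := Nat.pos_of_neZero p
  refine choose_modEq_choose_mod_mul_choose_div.trans ?_
  rw [Nat.mul_add_mod, Nat.mul_add_mod, Nat.mod_eq_of_lt ha, Nat.mod_eq_of_lt hb,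
    Nat.mul_add_div hp, Nat.mul_add_div hp, Nat.div_eq_of_lt ha, Nat.div_eq_of_lt hb,
    add_zero, add_zero, mul_comm]

theorem choose_mul_add_mul_add_modEq_zero {m n a b : ℕ} (hb : b < p) (hab : a < b) :
    (p * m + a).choose (p * n + b) ≡ 0 [ZMOD p] := by
  simpa [Nat.choose_eq_zero_of_lt hab] using choose_mul_add_mul_add_modEq (m := m) (n := n)
    (hab.trans hb) hb

theorem centralBinom_mul_add_modEq {n k : ℕ} (hk : k < p) :
    (p * n + k).centralBinom ≡ n.centralBinom * k.centralBinom [ZMOD p] := by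
  simp only [Nat.centralBinom_eq_two_mul_choose]
  rcases lt_or_ge (2 * k) p with hlt | hge
  · rw [show 2 * (p * n + k) = p * (2 * n) + 2 * k by ring]
    exact choose_mul_add_mul_add_modEq hlt hk
  · obtain ⟨r, hr⟩ := Nat.exists_eq_add_of_le hge
    have hrk : r < k := by omega
    have hlow : (2 * k).choose k ≡ 0 [ZMOD p] := by
      simpa [hr] using choose_mul_add_mul_add_modEq_zero (m := 1) (n := 0) hk hrk
    have hhigh : (2 * (p * n + k)).choose (p * n + k) ≡ 0 [ZMOD p] := by
      rw [show 2 * (p * n + k) = p * (2 * n + 1) + r by rw [mul_add, hr]; ring]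
      exact choose_mul_add_mul_add_modEq_zero hk hrk
    simpa using hhigh.trans (hlow.mul_left ((2 * n).choose n)).symm

end Choose

theorem central_binom_lucas (p : ℕ) (hp : p.Prime) (n k : ℕ) (hk : k < p) :
    (((2 * (p * n + k)).choose (p * n + k) : ℤ)) ≡
      ((2 * n).choose n : ℤ) * ((2 * k).choose k : ℤ) [ZMOD p] := by
  have : Fact p.Prime := ⟨hp⟩
  simpa only [Nat.centralBinom_eq_two_mul_choose] using
    Choose.centralBinom_mul_add_modEq (n := n) hk
end

section
/- Let T(n) denote the central trinomial coefficients, i.e. T(n) is the constant term (coefficient of x^0) of (x^{-1} + 1 + x)^n, equivalently T(n) = Σ_{k=0}^{⌊n/2⌋} binom(n, 2k)·binom(2k, k). Then for every prime p, every n ≥ 0 and every k with 0 ≤ k ≤ p−1, T(pn+k) ≡ T(n)·T(k) (mod p). -/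
/-- The central trinomial coefficients. -/
def centralTrinomial (n : ℕ) : ℕ :=
  ∑ k ∈ Finset.range (n / 2 + 1), n.choose (2 * k) * (2 * k).choose k

/-!
`T(n)` is the coefficient of `X ^ n` in `q ^ n`, where `q = 1 + X + X ^ 2`. Over `ZMod p` the
Frobenius gives `q ^ (p * n + k) = expand p (q ^ n) * q ^ k`, and as `q ^ k` has degree
`2 * k < p + k`, the coefficient of `X ^ (p * n + k)` can only come from `X ^ (p * n) * X ^ k`.
-/

open Finset Polynomial

theorem centralTrinomial_eq_sum_choose_mul_choose (n : ℕ) :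
    centralTrinomial n = ∑ j ∈ range (n + 1), n.choose j * j.choose (n - j) := by
  calc centralTrinomial n
      = ∑ i ∈ range (n / 2 + 1), n.choose (n - i) * (n - i).choose i := by
        refine sum_congr rfl fun i hi => ?_
        rw [mem_range] at hi
        rw [Nat.choose_mul (by omega), Nat.choose_symm (by omega), two_mul, Nat.add_sub_cancel]
    _ = ∑ i ∈ range (n + 1), n.choose (n - i) * (n - i).choose i := by
        refine sum_subset (range_subset_range.2 (by omega)) fun i _ hi => ?_
        rw [mem_range] at hi
        rw [Nat.choose_eq_zero_of_lt (n := n - i) (by omega), mul_zero]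
    _ = ∑ j ∈ range (n + 1), n.choose j * j.choose (n - j) := by
        rw [← sum_range_reflect]
        refine sum_congr rfl fun i hi => ?_
        rw [mem_range] at hi
        rw [Nat.add_sub_cancel, Nat.sub_sub_self (by omega)]

theorem coeff_one_add_X_add_X_sq_pow (R : Type*) [CommSemiring R] (n : ℕ) :
    ((1 + X + X ^ 2 : R[X]) ^ n).coeff n = centralTrinomial n := by
  rw [show (1 + X + X ^ 2 : R[X]) = X * (1 + X) + 1 by ring, add_pow,
    centralTrinomial_eq_sum_choose_mul_choose]
  push_cast
  simp only [one_pow, mul_one, mul_pow, finsetSum_coeff, coeff_mul_natCast, coeff_X_pow_mul',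
    coeff_one_add_X_pow]
  refine sum_congr rfl fun j hj => ?_
  rw [if_pos (by rw [mem_range] at hj; omega), mul_comm]

theorem natDegree_one_add_X_add_X_sq_pow_le (R : Type*) [Semiring R] (n : ℕ) :
    ((1 + X + X ^ 2 : R[X]) ^ n).natDegree ≤ 2 * n := by
  rw [mul_comm]
  exact natDegree_pow_le_of_le n (by compute_degree)

theorem coeff_expand_mul_of_natDegree_lt {R : Type*} [CommSemiring R] {p n k : ℕ} {f g : R[X]}
    (hk : k < p) (hg : g.natDegree < p + k) :
    (expand R p f * g).coeff (p * n + k) = f.coeff n * g.coeff k := by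
  have hp : 0 < p := by omega
  rw [coeff_mul, sum_eq_single (p * n, k) _ (by simp), coeff_expand_mul' hp]
  rintro ⟨a, b⟩ hab hne
  rw [HasAntidiagonal.mem_antidiagonal] at hab
  dsimp only at hab ⊢
  rw [coeff_expand hp]
  split_ifs with hpa
  · obtain ⟨m, rfl⟩ := hpa
    rw [coeff_eq_zero_of_natDegree_lt (p := g), mul_zero]
    rcases lt_trichotomy m n with hmn | rfl | hmn
    · nlinarith
    · exact absurd (by simp; omega) hne
    · nlinarith
  · rw [zero_mul]

theorem central_trinomial_lucas (p : ℕ) (hp : p.Prime) (n k : ℕ) (hk : k < p) :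
    (centralTrinomial (p * n + k) : ℤ) ≡
      (centralTrinomial n : ℤ) * (centralTrinomial k : ℤ) [ZMOD p] := by
  have : Fact p.Prime := ⟨hp⟩
  rw [← ZMod.intCast_eq_intCast_iff]
  push_cast
  simp only [← coeff_one_add_X_add_X_sq_pow (ZMod p)]
  rw [pow_add, pow_mul, ← ZMod.expand_card, ← map_pow]
  refine coeff_expand_mul_of_natDegree_lt hk ?_
  have := natDegree_one_add_X_add_X_sq_pow_le (ZMod p) k
  omega
end

section
/- Define the generalized central trinomial numbers T_{a,b,c}(n) = Σ_{k=0}^{⌊n/2⌋} binom(n,2k)·binom(2k,k)·(ac)^k·b^{n−2k} for integers a,b,c. Then for every prime p, every n ≥ 0 and every k with 0 ≤ k ≤ p−1, T_{a,b,c}(pn+k) ≡ T_{a,b,c}(n)·T_{a,b,c}(k) (mod p). -/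
/-- The generalized central trinomial numbers `T_{a,b,c}(n)`. -/
def genTrinomial (a b c : ℤ) (n : ℕ) : ℤ :=
  ∑ k ∈ Finset.range (n / 2 + 1),
    (n.choose (2 * k) : ℤ) * ((2 * k).choose k : ℤ) * (a * c) ^ k * b ^ (n - 2 * k)

/-!
`T_{a,b,c}(n)` is the coefficient of `X ^ n` in `F ^ n`, where `F = a X ^ 2 + b X + c`.
Modulo `p`, Frobenius gives `F ^ (p n + k) = F(X ^ p) ^ n * F ^ k`. Since `F ^ k` has degree at
most `2 k < p + k`, the only way to reach `X ^ (p n + k)` is `X ^ (p n)` from the first factor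
times `X ^ k` from the second, and the two coefficients are `T(n)` and `T(k)`.
-/

open Polynomial Finset

theorem Finset.sum_range_succ_ite_two_dvd {M : Type*} [AddCommMonoid M] (f : ℕ → M) (n : ℕ) :
    ∑ j ∈ range (n + 1), (if 2 ∣ j then f j else 0) =
      ∑ k ∈ range (n / 2 + 1), f (2 * k) := by
  rw [← sum_filter]
  refine sum_nbij' (· / 2) (2 * ·) ?_ ?_ ?_ ?_ ?_ <;> simp only [mem_filter, mem_range]
  · intro j hj; omega
  · intro k hk; omega
  · intro j hj; omega
  · intro k _; omega
  · intro j ⟨_, hj⟩; rw [Nat.mul_div_cancel' hj]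

namespace Polynomial

variable {R : Type*} [CommSemiring R]

theorem coeff_C_mul_X_add_C_pow (a c : R) (m t : ℕ) :
    ((C a * X + C c) ^ m).coeff t = m.choose t * a ^ t * c ^ (m - t) := by
  rw [add_pow, finsetSum_coeff]
  simp only [mul_pow, ← C_pow, ← C_eq_natCast, mul_right_comm _ (X ^ _), ← C_mul,
    coeff_C_mul_X_pow]
  rw [sum_ite_eq]
  split_ifs with h
  · ring
  · rw [Nat.choose_eq_zero_of_lt (by simpa using h)]; simp

theorem coeff_C_mul_X_sq_add_C_pow (a c : R) (m t : ℕ) :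
    ((C a * X ^ 2 + C c) ^ m).coeff t =
      if 2 ∣ t then m.choose (t / 2) * a ^ (t / 2) * c ^ (m - t / 2) else 0 := by
  have : C a * X ^ 2 + C c = expand R 2 (C a * X + C c) := by simp
  rw [this, ← map_pow, coeff_expand two_pos, coeff_C_mul_X_add_C_pow]

theorem coeff_C_mul_X_sq_add_C_mul_X_add_C_pow_self (a b c : R) (n : ℕ) :
    ((C a * X ^ 2 + C b * X + C c) ^ n).coeff n =
      ∑ k ∈ range (n / 2 + 1),
        n.choose (2 * k) * (2 * k).choose k * (a * c) ^ k * b ^ (n - 2 * k) := by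
  have hterm : ∀ j ∈ range (n + 1),
      ((C a * X ^ 2 + C c) ^ j * (C b * X) ^ (n - j) * (n.choose j : R[X])).coeff n =
        if 2 ∣ j then n.choose j * (j.choose (j / 2) * (a * c) ^ (j / 2)) * b ^ (n - j)
        else 0 := by
    intro j hj
    have hjn : j ≤ n := Nat.lt_succ_iff.mp (mem_range.mp hj)
    have hsplit : (C a * X ^ 2 + C c) ^ j * (C b * X) ^ (n - j) * (n.choose j : R[X]) =
        C (n.choose j * b ^ (n - j)) * ((C a * X ^ 2 + C c) ^ j * X ^ (n - j)) := by
      simp only [mul_pow, C_mul, C_pow, C_eq_natCast]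
      ring
    rw [hsplit, coeff_C_mul, coeff_mul_X_pow', if_pos (Nat.sub_le n j), Nat.sub_sub_self hjn,
      coeff_C_mul_X_sq_add_C_pow]
    split_ifs with h
    · obtain ⟨i, rfl⟩ := h
      rw [show 2 * i - 2 * i / 2 = 2 * i / 2 by omega, mul_pow]
      ring
    · simp
  rw [show C a * X ^ 2 + C b * X + C c = (C a * X ^ 2 + C c) + C b * X by ring, add_pow,
    finsetSum_coeff, sum_congr rfl hterm, sum_range_succ_ite_two_dvd]
  refine sum_congr rfl fun k _ => ?_
  rw [Nat.mul_div_cancel_left k two_pos]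
  ring

theorem coeff_expand_mul_of_natDegree_lt {p k : ℕ} (hk : k < p) (f g : R[X])
    (hg : g.natDegree < p + k) (n : ℕ) :
    (expand R p f * g).coeff (p * n + k) = f.coeff n * g.coeff k := by
  have hp : 0 < p := by omega
  rw [coeff_mul, sum_eq_single (p * n, k)]
  · rw [coeff_expand_mul' hp]
  · rintro ⟨x, y⟩ hxy hne
    rw [HasAntidiagonal.mem_antidiagonal] at hxy
    dsimp only at hxy ⊢
    rw [coeff_expand hp]
    split_ifs with hdvd
    · obtain ⟨m, rfl⟩ := hdvd
      rcases lt_trichotomy m n with hmn | rfl | hnm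
      · have : p * m + p ≤ p * n := by simpa [mul_add] using Nat.mul_le_mul_left p hmn
        rw [coeff_eq_zero_of_natDegree_lt (p := g) (by omega), mul_zero]
      · simp only [ne_eq, Prod.mk.injEq, true_and] at hne
        omega
      · have : p * n + p ≤ p * m := by simpa [mul_add] using Nat.mul_le_mul_left p hnm
        omega
    · rw [zero_mul]
  · simp

end Polynomial

theorem Int.cast_genTrinomial {R : Type*} [CommRing R] (a b c : ℤ) (n : ℕ) :
    (genTrinomial a b c n : R) = ((C (a : R) * X ^ 2 + C (b : R) * X + C (c : R)) ^ n).coeff n := by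
  rw [coeff_C_mul_X_sq_add_C_mul_X_add_C_pow_self, genTrinomial]
  push_cast
  rfl

theorem gen_trinomial_lucas (a b c : ℤ) (p : ℕ) (hp : p.Prime) (n k : ℕ) (hk : k < p) :
    genTrinomial a b c (p * n + k) ≡
      genTrinomial a b c n * genTrinomial a b c k [ZMOD p] := by
  have : Fact p.Prime := ⟨hp⟩
  rw [← ZMod.intCast_eq_intCast_iff]
  push_cast [Int.cast_genTrinomial]
  set F : (ZMod p)[X] := C (a : ZMod p) * X ^ 2 + C (b : ZMod p) * X + C (c : ZMod p)
  have hFk : (F ^ k).natDegree < p + k :=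
    (natDegree_pow_le_of_le k natDegree_quadratic_le).trans_lt (by omega)
  rw [pow_add, pow_mul, ← ZMod.expand_card, ← map_pow,
    coeff_expand_mul_of_natDegree_lt hk _ _ hFk]
end

section
/- Let S(n) = Σ_{k=0}^{n} binom(n,k)^2 · binom(n−k, k). Then for every prime p, every n ≥ 0 and every k with 0 ≤ k ≤ p−1, S(pn+k) ≡ S(n)·S(k) (mod p). -/
/-! Since `p` is prime, Lucas' theorem gives `C(pn+r, pa+b) ≡ C(n,a) C(r,b)` for base-`p` digits
`r, b`, hence the same factorisation for each summand `C(N,j)^2 C(N-j,j)` of `S(N)`. Splitting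
the summation index `j = pa + b` into its last digit and the rest then factors `S(pn+r)` modulo `p`
as `S(n) S(r)`. -/

/-- `S(n) = Σ_{k=0}^n binom(n,k)^2 binom(n-k,k)`. -/
def Sseq (n : ℕ) : ℕ :=
  ∑ k ∈ Finset.range (n + 1), n.choose k ^ 2 * (n - k).choose k

open Finset

theorem Finset.sum_range_mul_eq_sum_sum {M : Type*} [AddCommMonoid M] (f : ℕ → M) (p m : ℕ) :
    ∑ j ∈ range (p * m), f j = ∑ a ∈ range m, ∑ b ∈ range p, f (p * a + b) := by
  induction m with
  | zero => simp
  | succ m ih => rw [Nat.mul_succ, sum_range_add, ih, sum_range_succ]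

theorem Choose.choose_mul_add_mul_add_modEq_s3 {p : ℕ} [Fact p.Prime] {n r a b : ℕ}
    (hr : r < p) (hb : b < p) :
    (p * n + r).choose (p * a + b) ≡ n.choose a * r.choose b [MOD p] := by
  have hp : 0 < p := Fact.out (p := p.Prime) |>.pos
  simpa [Nat.mul_add_mod, Nat.mul_add_div hp, Nat.mod_eq_of_lt, Nat.div_eq_of_lt, hr, hb,
    mul_comm] using Choose.choose_modEq_choose_mod_mul_choose_div_nat (p := p) (n := p * n + r)
      (k := p * a + b)

namespace Sseq

def term (n j : ℕ) : ℕ := n.choose j ^ 2 * (n - j).choose j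

theorem eq_sum_range_term {n m : ℕ} (h : n < m) : Sseq n = ∑ j ∈ range m, term n j :=
  sum_subset (range_subset_range.2 h) fun j _ hj => by
    simp [Nat.choose_eq_zero_of_lt (show n < j by simpa using hj)]

theorem term_mul_add_mul_add {p : ℕ} [Fact p.Prime] {n r a b : ℕ} (hr : r < p) (hb : b < p) :
    (term (p * n + r) (p * a + b) : ZMod p) = term n a * term r b := by
  have lucas {n r : ℕ} (hr : r < p) :
      ((p * n + r).choose (p * a + b) : ZMod p) = n.choose a * r.choose b := by
    exact_mod_cast (ZMod.natCast_eq_natCast_iff _ _ _).2 (Choose.choose_mul_add_mul_add_modEq_s3 hr hb)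
  simp only [term, Nat.cast_mul, Nat.cast_pow, lucas hr]
  -- unless `a ≤ n` and `b ≤ r`, a Lucas factor vanishes and the truncated `N - j` is irrelevant
  by_cases hn : a ≤ n
  · by_cases hr' : b ≤ r
    · have hsub : p * n + r - (p * a + b) = p * (n - a) + (r - b) := by
        have : p * a ≤ p * n := Nat.mul_le_mul_left p hn
        rw [Nat.mul_sub]; omega
      rw [hsub, lucas (by omega)]
      ring
    · simp [Nat.choose_eq_zero_of_lt (not_le.1 hr')]
  · simp [Nat.choose_eq_zero_of_lt (not_le.1 hn)]

end Sseq

theorem Sseq_lucas (p : ℕ) (hp : p.Prime) (n k : ℕ) (hk : k < p) :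
    (Sseq (p * n + k) : ℤ) ≡ (Sseq n : ℤ) * (Sseq k : ℤ) [ZMOD p] := by
  have := Fact.mk hp
  suffices h : (Sseq (p * n + k) : ZMod p) = Sseq n * Sseq k by
    rw [← ZMod.intCast_eq_intCast_iff]
    exact_mod_cast h
  have hlt : p * n + k < p * (n + 1) := by rw [Nat.mul_succ]; omega
  rw [Sseq.eq_sum_range_term hlt, sum_range_mul_eq_sum_sum, Sseq.eq_sum_range_term n.lt_add_one,
    Sseq.eq_sum_range_term hk]
  push_cast
  rw [sum_mul_sum]
  exact sum_congr rfl fun a _ => sum_congr rfl fun b hb =>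
    Sseq.term_mul_add_mul_add hk (mem_range.1 hb)
end

section
/- Let S(n) = Σ_{k=0}^{n} binom(n,k)^2 · binom(n−k, k). Then S(n) is odd for every nonnegative integer n. -/
/-! Grouping `C(n,k) · C(n-k,k)` as the trinomial coefficient `n! / (k! k! (n-2k)!)`
rewrites it as `C(n,2k) · C(2k,k)`, so every term of `S(n)` with `k ≥ 1` carries the even
central binomial coefficient `C(2k,k)`; only the term `k = 0`, which is `1`, survives mod 2. -/

namespace Nat

theorem choose_mul_choose_sub_self (n k : ℕ) :
    n.choose k * (n - k).choose k = n.choose (2 * k) * k.centralBinom := by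
  rw [centralBinom_eq_two_mul_choose, choose_mul (by omega), two_mul, Nat.add_sub_cancel]

theorem even_choose_mul_choose_sub_self (n : ℕ) {k : ℕ} (hk : 0 < k) :
    Even (n.choose k * (n - k).choose k) := by
  rw [choose_mul_choose_sub_self, even_iff_two_dvd]
  exact Dvd.dvd.mul_left (two_dvd_centralBinom_of_one_le hk) _

end Nat

theorem Sseq_odd (n : ℕ) : Odd (Sseq n) := by
  rw [Sseq, Finset.sum_range_succ', Nat.choose_zero_right, Nat.sub_zero, Nat.choose_zero_right,
    one_pow, one_mul]
  refine Even.add_one (Finset.even_sum _ fun k _ => ?_)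
  rw [sq, mul_assoc]
  exact (Nat.even_choose_mul_choose_sub_self n k.succ_pos).mul_left _
end

section
/- Let A(n) = Σ_{k=0}^{n} binom(n,k)^2 · binom(n+k,k)^2 be the Apéry numbers. Then for every prime p, every n ≥ 0, and every k with 0 ≤ k ≤ p−1, A(pn+k) ≡ A(n)·A(k) (mod p). -/
/-!
Split the index of summation `i < p (n + 1)` as `i = p m + j` with `j < p`. By Lucas' theorem
the binomial coefficients of the term of `A(pn + k)` at `i` factor modulo `p` into those of the
term of `A(k)` at `j` times those of `A(n)` at `m`, so `A(pn + k)` becomes the product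
`A(n) A(k)` modulo `p`. The only subtlety is the carry in `(pn + k) + (pm + j)` when `k + j ≥ p`:
then both `binom(pn + k + pm + j, pm + j)` and `binom(k + j, j)` vanish modulo `p`.
-/

/-- The Apéry numbers `A(n) = Σ_{k=0}^n binom(n,k)^2 binom(n+k,k)^2`. -/
def apery (n : ℕ) : ℕ :=
  ∑ k ∈ Finset.range (n + 1), n.choose k ^ 2 * (n + k).choose k ^ 2

open Finset

theorem Finset.sum_range_mul_eq_sum_sum_range {M : Type*} [AddCommMonoid M] (f : ℕ → M)
    (a b : ℕ) :
    ∑ i ∈ range (a * b), f i = ∑ m ∈ range b, ∑ j ∈ range a, f (a * m + j) := by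
  induction b with
  | zero => simp
  | succ b ih =>
    rw [sum_range_succ, ← ih, Nat.mul_succ, sum_range_add]

namespace Choose

variable {p : ℕ} [Fact p.Prime]

theorem cast_choose_mul_add_mul_add {n m k j : ℕ} (hk : k < p) (hj : j < p) :
    ((p * n + k).choose (p * m + j) : ZMod p) = k.choose j * n.choose m := by
  have lucas := (ZMod.intCast_eq_intCast_iff _ _ p).mpr
    (choose_modEq_choose_mod_mul_choose_div (n := p * n + k) (k := p * m + j) (p := p))
  have hp : 0 < p := Fact.out (p := p.Prime) |>.pos
  push_cast at lucas
  simpa [Nat.mul_add_mod, Nat.mul_add_div hp, Nat.mod_eq_of_lt, Nat.div_eq_of_lt, hk, hj]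
    using lucas

theorem cast_choose_mul_add_add_eq_zero {k j : ℕ} (hk : k < p) (hj : j < p) (hkj : p ≤ k + j)
    (n m : ℕ) : ((p * n + (k + j)).choose (p * m + j) : ZMod p) = 0 := by
  rw [show p * n + (k + j) = p * (n + 1) + (k + j - p) by rw [mul_add_one]; omega,
    cast_choose_mul_add_mul_add (by omega) hj, Nat.choose_eq_zero_of_lt (by omega)]
  simp

theorem cast_choose_add_mul_add_mul_add {n m k j : ℕ} (hk : k < p) (hj : j < p) :
    ((p * n + k + (p * m + j)).choose (p * m + j) : ZMod p) =
      (k + j).choose j * (n + m).choose m := by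
  rw [show p * n + k + (p * m + j) = p * (n + m) + (k + j) by ring]
  by_cases hkj : k + j < p
  · exact cast_choose_mul_add_mul_add hkj hj
  · have hkj_choose : ((k + j).choose j : ZMod p) = 0 := by
      simpa using cast_choose_mul_add_add_eq_zero hk hj (not_lt.mp hkj) 0 0
    rw [hkj_choose, zero_mul, cast_choose_mul_add_add_eq_zero hk hj (not_lt.mp hkj)]

end Choose

def aperyTerm (N i : ℕ) : ℕ :=
  N.choose i ^ 2 * (N + i).choose i ^ 2

theorem apery_eq_sum_range_of_lt {N M : ℕ} (h : N < M) :
    apery N = ∑ i ∈ range M, aperyTerm N i := by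
  refine sum_subset (range_subset_range.mpr h) fun i _ hi => ?_
  simp [Nat.choose_eq_zero_of_lt (not_lt.mp (mem_range.not.mp hi))]

theorem cast_aperyTerm_mul_add {p : ℕ} [Fact p.Prime] {n m k j : ℕ} (hk : k < p) (hj : j < p) :
    (aperyTerm (p * n + k) (p * m + j) : ZMod p) = aperyTerm n m * aperyTerm k j := by
  simp only [aperyTerm, Nat.cast_mul, Nat.cast_pow, Choose.cast_choose_mul_add_mul_add hk hj,
    Choose.cast_choose_add_mul_add_mul_add hk hj]
  ring

theorem apery_lucas (p : ℕ) (hp : p.Prime) (n k : ℕ) (hk : k < p) :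
    (apery (p * n + k) : ℤ) ≡ (apery n : ℤ) * (apery k : ℤ) [ZMOD p] := by
  have : Fact p.Prime := ⟨hp⟩
  rw [← ZMod.intCast_eq_intCast_iff,
    apery_eq_sum_range_of_lt (M := p * (n + 1)) (by rw [mul_add_one]; omega),
    apery_eq_sum_range_of_lt (lt_add_one n), apery_eq_sum_range_of_lt hk,
    sum_range_mul_eq_sum_sum_range]
  push_cast [sum_mul_sum]
  exact sum_congr rfl fun m _ => sum_congr rfl fun j hj =>
    cast_aperyTerm_mul_add hk (mem_range.mp hj)
end

section
/- For every prime p and all integers a, b, c, the constant term of (a x^{-1} + b + c x)^{p−1}, which equals Σ_{k=0}^{⌊(p−1)/2⌋} binom(p−1, 2k)·binom(2k,k)·(ac)^k·b^{p−1−2k}, is congruent modulo p to the Legendre/Kronecker symbol ((b² − 4ac)/p). In particular, for p odd this constant term is congruent to (b² − 4ac)^{(p−1)/2} (mod p). -/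
/-!
Write `p = 2m + 1`. Modulo `p` we have `binom(2m, 2k) = binom(p - 1, 2k) ≡ 1`, and since
`m ≡ -1/2` also `binom(2k, k) ≡ (-4)^k binom(m, k)`. The sum defining `T_{a,b,c}(2m)` thus
becomes the binomial expansion of `(b² - 4ac)^m`. For `p = 2` the sum is just `b`.
-/

namespace ZMod

variable {p : ℕ} [Fact p.Prime]

theorem natCast_choose_sub_one {j : ℕ} (hj : j < p) :
    (((p - 1).choose j : ℕ) : ZMod p) = (-1) ^ j := by
  induction j with
  | zero => simp
  | succ j ih =>
    have hpascal : p.choose (j + 1) = (p - 1).choose j + (p - 1).choose (j + 1) := by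
      rw [← Nat.choose_succ_succ', Nat.sub_add_cancel (Fact.out : p.Prime).one_le]
    have hdvd : p ∣ p.choose (j + 1) := (Fact.out : p.Prime).dvd_choose_self j.succ_ne_zero hj
    have h := congrArg (Nat.cast : ℕ → ZMod p) hpascal
    rw [(natCast_eq_zero_iff _ _).mpr hdvd, Nat.cast_add, ih (by omega)] at h
    linear_combination -h

theorem natCast_centralBinom {m k : ℕ} (hm : 2 * m + 1 = p) (hk : k ≤ m) :
    (k.centralBinom : ZMod p) = (-4) ^ k * (m.choose k : ℕ) := by
  induction k with
  | zero => simp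
  | succ k ih =>
    have hp0 : ((2 * m + 1 : ℕ) : ZMod p) = 0 := hm ▸ natCast_self p
    have hunit : ((k + 1 : ℕ) : ZMod p) ≠ 0 := by
      rw [Ne, natCast_eq_zero_iff]
      exact fun h => absurd (Nat.le_of_dvd k.succ_pos h) (by omega)
    have hcb := congrArg (Nat.cast : ℕ → ZMod p) (Nat.succ_mul_centralBinom_succ k)
    have hch := congrArg (Nat.cast : ℕ → ZMod p) (Nat.choose_succ_right_eq m k)
    push_cast [Nat.cast_sub (by omega : k ≤ m)] at hcb hch hunit hp0 ⊢
    apply mul_left_cancel₀ hunit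
    -- `2 (2k + 1) = -4 (m - k)` because `2m + 1 = 0`
    linear_combination hcb + 2 * (2 * (k : ZMod p) + 1) * ih (by omega) - (-4) ^ (k + 1) * hch
      + 2 * (-4) ^ k * ((m.choose k : ℕ) : ZMod p) * hp0

end ZMod

theorem genTrinomial_two_mul_cast {p m : ℕ} [Fact p.Prime] (hm : 2 * m + 1 = p) (a b c : ℤ) :
    (genTrinomial a b c (2 * m) : ZMod p) = ((b : ZMod p) ^ 2 - 4 * a * c) ^ m := by
  rw [genTrinomial, Nat.mul_div_cancel_left m two_pos, sub_eq_neg_add, add_pow]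
  push_cast
  refine Finset.sum_congr rfl fun k hk => ?_
  have hkm : k ≤ m := Nat.lt_succ_iff.mp (Finset.mem_range.mp hk)
  have hchoose : (((2 * m).choose (2 * k) : ℕ) : ZMod p) = 1 := by
    rw [show 2 * m = p - 1 by omega, ZMod.natCast_choose_sub_one (by omega), pow_mul]
    norm_num
  rw [hchoose, ← Nat.centralBinom_eq_two_mul_choose, ZMod.natCast_centralBinom hm hkm,
    ← Nat.mul_sub, pow_mul]
  ring

theorem gen_trinomial_pm1 (p : ℕ) (hp : p.Prime) (a b c : ℤ) :
    (Odd p → genTrinomial a b c (p - 1) ≡ (b ^ 2 - 4 * a * c) ^ ((p - 1) / 2) [ZMOD p]) ∧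
    (p = 2 → genTrinomial a b c (p - 1) ≡ b [ZMOD p]) := by
  refine ⟨fun ⟨m, hm⟩ => ?_, fun h2 => by subst h2; simp [genTrinomial]⟩
  have : Fact p.Prime := ⟨hp⟩
  have hpm : p - 1 = 2 * m := by omega
  rw [← ZMod.intCast_eq_intCast_iff, hpm, Nat.mul_div_cancel_left m two_pos,
    genTrinomial_two_mul_cast hm.symm]
  push_cast
  rfl
end

section
/- For integers a, b, c with c ≠ 0 (working over ℚ), the generalized central trinomial numbers T(n) = Σ_{k=0}^{⌊n/2⌋} binom(n,2k)binom(2k,k)(ac)^k b^{n−2k} satisfy: the coefficient of x^{-1} in (a x^{-1}+b+c x)^n equals (T(n+1) − b·T(n))/(2c). -/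
/-!
Write `P = a x⁻¹ + b + c x`. Since `P ^ (n + 1) = P * P ^ n`, the constant term of `P ^ (n + 1)`
is `a [x¹] P ^ n + b [x⁰] P ^ n + c [x⁻¹] P ^ n`, and the symmetry
`a ^ k [x^k] P ^ n = c ^ k [x^(-k)] P ^ n` (induction on `n`) turns the first summand into the
last. It remains to see that `[x⁰] P ^ n = T(n)`, which follows by expanding
`P ^ n = ((a x⁻¹ + c x) + b) ^ n` binomially twice: only the even powers of `a x⁻¹ + c x`
have a constant term, namely `binom(2k, k) (ac) ^ k`.
-/

open LaurentPolynomial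

/-- The generalized central trinomial numbers `T_{a,b,c}(n)` over `ℚ`. -/
def genTrinomialQ (a b c : ℤ) (n : ℕ) : ℚ :=
  ∑ k ∈ Finset.range (n / 2 + 1),
    (n.choose (2 * k) : ℚ) * ((2 * k).choose k : ℚ) * ((a * c : ℤ) : ℚ) ^ k *
      ((b : ℚ)) ^ (n - 2 * k)

theorem Finset.sum_range_succ_ite_even {M : Type*} [AddCommMonoid M] (f : ℕ → M) (n : ℕ) :
    ∑ j ∈ range (n + 1), (if Even j then f j else 0) =
      ∑ k ∈ range (n / 2 + 1), f (2 * k) := by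
  rw [← sum_filter, ← sum_image (g := (2 * ·)) fun _ _ _ _ h => by simpa using h]
  congr 1
  ext j
  simp only [mem_filter, mem_range, mem_image, Nat.even_iff]
  exact ⟨fun h => ⟨j / 2, by omega, by omega⟩, fun ⟨k, hk, hkj⟩ => by omega⟩

namespace LaurentPolynomial

variable {R : Type*}

section Semiring

variable [Semiring R]

theorem coeff_C_mul_T (r : R) (m k : ℤ) :
    (C r * T m).coeff k = if m = k then r else 0 := by
  rw [← single_eq_C_mul_T, AddMonoidAlgebra.coeff_single, Finsupp.single_apply]

theorem coeff_C_mul_T_mul (r : R) (m k : ℤ) (f : R[T;T⁻¹]) :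
    (C r * T m * f).coeff k = r * f.coeff (k - m) := by
  rw [← single_eq_C_mul_T, AddMonoidAlgebra.coeff_single_mul_apply, neg_add_eq_sub]

theorem coeff_mul_C (f : R[T;T⁻¹]) (r : R) (k : ℤ) : (f * C r).coeff k = f.coeff k * r := by
  rw [← single_eq_C, AddMonoidAlgebra.coeff_mul_single_apply, neg_zero, add_zero]

noncomputable def trinomial (a b c : R) : R[T;T⁻¹] := C a * T (-1) + C b + C c * T 1

theorem coeff_trinomial_mul (a b c : R) (f : R[T;T⁻¹]) (k : ℤ) :
    (trinomial a b c * f).coeff k = a * f.coeff (k + 1) + b * f.coeff k + c * f.coeff (k - 1) := by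
  rw [trinomial, add_mul, add_mul, AddMonoidAlgebra.coeff_add, AddMonoidAlgebra.coeff_add,
    Finsupp.add_apply, Finsupp.add_apply, coeff_C_mul_T_mul, coeff_C_mul_T_mul, ← mul_one (C b),
    ← T_zero, coeff_C_mul_T_mul, sub_neg_eq_add, sub_zero]

end Semiring

section CommSemiring

variable [CommSemiring R]

theorem C_mul_T_pow (r : R) (m : ℤ) (i : ℕ) : (C r * T m) ^ i = C (r ^ i) * T (i * m) := by
  rw [mul_pow, ← map_pow, T_pow]

theorem coeff_zero_C_mul_T_neg_one_add_C_mul_T_one_pow (a c : R) (j : ℕ) :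
    ((C a * T (-1) + C c * T 1) ^ j).coeff 0 =
      if Even j then (j.choose (j / 2) : R) * (a * c) ^ (j / 2) else 0 := by
  have hterm : ∀ i ∈ Finset.range (j + 1), (C a * T (-1)) ^ i * (C c * T 1) ^ (j - i) *
      (j.choose i : R[T;T⁻¹]) = C (a ^ i * c ^ (j - i) * j.choose i) * T (j - i - i) := by
    intro i hi
    have hij : i ≤ j := Nat.lt_succ_iff.mp (Finset.mem_range.mp hi)
    rw [C_mul_T_pow, C_mul_T_pow, ← map_natCast C, map_mul, map_mul, Nat.cast_sub hij]
    rw [show ((j : ℤ) - i - i) = -i + (j - i) by ring, T_add]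
    simp only [mul_neg, mul_one]
    ring
  rw [add_pow, Finset.sum_congr rfl hterm, AddMonoidAlgebra.coeff_sum, Finset.sum_apply']
  simp only [coeff_C_mul_T]
  split_ifs with hj
  · obtain ⟨m, rfl⟩ := hj
    rw [Finset.sum_eq_single m (fun i _ him => if_neg (by omega))
      (fun h => absurd (Finset.mem_range.mpr (by omega)) h), if_pos (by push_cast; ring)]
    rw [show (m + m) / 2 = m by omega, show m + m - m = m by omega, mul_pow]
    ring
  · obtain ⟨m, rfl⟩ := Nat.not_even_iff_odd.mp hj
    exact Finset.sum_eq_zero fun i _ => if_neg (by omega)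

variable (a b c : R)

theorem coeff_zero_trinomial_pow (n : ℕ) :
    (trinomial a b c ^ n).coeff 0 = ∑ k ∈ Finset.range (n / 2 + 1),
      (n.choose (2 * k) : R) * ((2 * k).choose k : R) * (a * c) ^ k * b ^ (n - 2 * k) := by
  rw [trinomial, add_right_comm, add_pow, AddMonoidAlgebra.coeff_sum, Finset.sum_apply']
  simp only [← map_pow, ← map_natCast C, mul_assoc, ← map_mul, coeff_mul_C,
    coeff_zero_C_mul_T_neg_one_add_C_mul_T_one_pow, ite_mul, zero_mul]
  rw [Finset.sum_range_succ_ite_even]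
  refine Finset.sum_congr rfl fun k _ => ?_
  rw [Nat.mul_div_cancel_left k two_pos]
  ring

theorem pow_mul_coeff_trinomial_pow_eq_pow_mul_coeff_neg (n k : ℕ) :
    a ^ k * (trinomial a b c ^ n).coeff k = c ^ k * (trinomial a b c ^ n).coeff (-k) := by
  induction n generalizing k with
  | zero =>
    rcases k with _ | k
    · simp
    · rw [pow_zero, ← T_zero, T_apply, T_apply, if_neg (by omega), if_neg (by omega),
        mul_zero, mul_zero]
  | succ n ih =>
    rcases k with _ | k
    · simp
    set X : ℤ →₀ R := (trinomial a b c ^ n).coeff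
    have h0 := ih k
    have h1 := ih (k + 1)
    have h2 := ih (k + 2)
    push_cast at h0 h1 h2
    rw [pow_succ' (trinomial a b c), coeff_trinomial_mul, coeff_trinomial_mul]
    push_cast
    calc a ^ (k + 1) * (a * X (k + 1 + 1) + b * X (k + 1) + c * X (k + 1 - 1))
        = a ^ (k + 2) * X (k + 2) + b * (a ^ (k + 1) * X (k + 1)) + a * c * (a ^ k * X k) := by
          ring_nf
      _ = c ^ (k + 2) * X (-(k + 2)) + b * (c ^ (k + 1) * X (-(k + 1))) +
            a * c * (c ^ k * X (-k)) := by
          rw [h0, h1, h2]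
      _ = c ^ (k + 1) * (a * X (-(k + 1) + 1) + b * X (-(k + 1)) + c * X (-(k + 1) - 1)) := by
          ring_nf

theorem coeff_zero_trinomial_pow_succ (n : ℕ) :
    (trinomial a b c ^ (n + 1)).coeff 0 =
      b * (trinomial a b c ^ n).coeff 0 + 2 * c * (trinomial a b c ^ n).coeff (-1) := by
  have hsymm := pow_mul_coeff_trinomial_pow_eq_pow_mul_coeff_neg a b c n 1
  rw [pow_succ' (trinomial a b c), coeff_trinomial_mul]
  push_cast at hsymm ⊢
  rw [pow_one, pow_one] at hsymm
  rw [hsymm]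
  ring

end CommSemiring
end LaurentPolynomial

theorem gen_trinomial_coeff_neg_one (a b c : ℤ) (hc : c ≠ 0) (n : ℕ) :
    ((((C (a : ℚ)) * T (-1) + C (b : ℚ) + C (c : ℚ) * T 1) ^ n : LaurentPolynomial ℚ).coeff (-1)) =
      (genTrinomialQ a b c (n + 1) - (b : ℚ) * genTrinomialQ a b c n) / (2 * (c : ℚ)) := by
  have hT (m : ℕ) : genTrinomialQ a b c m = (trinomial (a : ℚ) b c ^ m).coeff 0 := by
    rw [coeff_zero_trinomial_pow, genTrinomialQ, Int.cast_mul]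
  rw [hT, hT, coeff_zero_trinomial_pow_succ, add_sub_cancel_left,
    mul_div_cancel_left₀ _ (mul_ne_zero two_ne_zero (Int.cast_ne_zero.mpr hc))]
  rfl
end

section
/- Suppose B : ℕ → ℤ satisfies B(0) = 1 and the Lucas congruences B(pn+k) ≡ B(n)·B(k) (mod p) for all n ≥ 0 and 0 ≤ k ≤ p−1, for a prime p. Let α, β ∈ ℤ and define A(n) = α·B(n) + β·B(n+1). Then for all n ≥ 0 and 0 ≤ k ≤ p−1: A(pn+k) ≡ B(n)·A(k) (mod p) if k < p−1, and A(pn+(p−1)) ≡ B(n)·A(p−1) + A(n) − A(0)·B(n) (mod p). -/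
/-!
For `k < p - 1` both `B (p n + k)` and `B (p n + k + 1)` lie in the same block of `p` consecutive
indices, so the Lucas congruence pulls out the common factor `B n`. For `k = p - 1` the second index
wraps around to `p (n + 1)`, where `B (p (n + 1)) ≡ B (n + 1)`; writing `β B (n + 1) = A n - α B n`
and `B p ≡ B 1` produces the correction term `A n - A 0 B n`.
-/

section Lucas

variable {p : ℕ} {B : ℕ → ℤ} (hB : ∀ n k : ℕ, k < p → B (p * n + k) ≡ B n * B k [ZMOD p])
include hB

theorem lucas_add_one_of_add_one_lt {k : ℕ} (hk : k + 1 < p) (n : ℕ) :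
    B (p * n + k + 1) ≡ B n * B (k + 1) [ZMOD p] := by
  simpa only [Nat.add_assoc] using hB n (k + 1) hk

theorem lucas_mul (hp : 0 < p) (hB0 : B 0 = 1) (n : ℕ) : B (p * n) ≡ B n [ZMOD p] := by
  simpa [hB0] using hB n 0 hp

variable {α β : ℤ} {A : ℕ → ℤ} (hA : ∀ n, A n = α * B n + β * B (n + 1))
include hA

theorem shifted_lucas_of_lt {k : ℕ} (hk : k < p - 1) (n : ℕ) :
    A (p * n + k) ≡ B n * A k [ZMOD p] := by
  rw [hA, hA]
  calc α * B (p * n + k) + β * B (p * n + k + 1)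
      ≡ α * (B n * B k) + β * (B n * B (k + 1)) [ZMOD p] :=
        ((hB n k (by omega)).mul_left α).add
          ((lucas_add_one_of_add_one_lt hB (by omega) n).mul_left β)
    _ = B n * (α * B k + β * B (k + 1)) := by ring

theorem shifted_lucas_pred (hp : 0 < p) (hB0 : B 0 = 1) (n : ℕ) :
    A (p * n + (p - 1)) ≡ B n * A (p - 1) + A n - A 0 * B n [ZMOD p] := by
  have hwrap : p * n + (p - 1) + 1 = p * (n + 1) := by rw [Nat.mul_succ]; omega
  have hlast : B (p * n + (p - 1)) ≡ B n * B (p - 1) [ZMOD p] := hB n (p - 1) (by omega)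
  have hnext : B (p * n + (p - 1) + 1) ≡ B (n + 1) [ZMOD p] :=
    hwrap ▸ lucas_mul hB hp hB0 (n + 1)
  have hBp : B p ≡ B 1 [ZMOD p] := by simpa using lucas_mul hB hp hB0 1
  simp only [hA, hB0, Nat.sub_add_cancel hp]
  calc α * B (p * n + (p - 1)) + β * B (p * n + (p - 1) + 1)
      ≡ α * (B n * B (p - 1)) + β * B (n + 1) [ZMOD p] :=
        (hlast.mul_left α).add (hnext.mul_left β)
    _ = B n * (α * B (p - 1) + β * B 1) + (α * B n + β * B (n + 1))
          - (α * 1 + β * B 1) * B n := by ring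
    _ ≡ B n * (α * B (p - 1) + β * B p) + (α * B n + β * B (n + 1))
          - (α * 1 + β * B 1) * B n [ZMOD p] :=
        ((((hBp.symm.mul_left β).add_left _).mul_left _).add_right _).sub_right _

end Lucas

theorem shifted_lucas (p : ℕ) (hp : p.Prime) (B : ℕ → ℤ) (hB0 : B 0 = 1)
    (hB : ∀ n k : ℕ, k < p → B (p * n + k) ≡ B n * B k [ZMOD p])
    (α β : ℤ) (A : ℕ → ℤ) (hA : ∀ n, A n = α * B n + β * B (n + 1)) :
    (∀ n k : ℕ, k < p - 1 → A (p * n + k) ≡ B n * A k [ZMOD p]) ∧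
    (∀ n : ℕ, A (p * n + (p - 1)) ≡ B n * A (p - 1) + A n - A 0 * B n [ZMOD p]) :=
  ⟨fun n _ hk => shifted_lucas_of_lt hB hA hk n, shifted_lucas_pred hB hA hp.pos hB0⟩
end

section
/- Let C(n) = binom(2n,n)/(n+1) denote the Catalan numbers. Then for every prime p, every n ≥ 0, and every k with 0 ≤ k ≤ p−2, C(pn+k) ≡ binom(2n,n)·C(k) (mod p). -/
/-!
Writing `C(m) = binom(2m, m) - binom(2m, m + 1)` reduces the claim to Lucas' theorem for the
two binomial coefficients, with `m = p n + k`. If `2k < p`, the base-`p` digits of `2m` are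
`(2n, 2k)` and Lucas gives `C(m) ≡ binom(2n, n) C(k)`. If `2k ≥ p`, the last digit of `2m` is
`2k - p < k`, so both binomial coefficients vanish mod `p` and `C(m) ≡ 0`; this applies to
`C(k)` itself (the case `n = 0`), so both sides vanish.
-/

theorem catalan_eq_choose_sub_choose (m : ℕ) :
    (catalan m : ℤ) = ((2 * m).choose m : ℤ) - ((2 * m).choose (m + 1) : ℤ) := by
  have h_catalan : ((m : ℤ) + 1) * catalan m = (2 * m).choose m := by
    exact_mod_cast succ_mul_catalan_eq_centralBinom m
  have h_succ : ((2 * m).choose (m + 1) : ℤ) * (m + 1) = (2 * m).choose m * m := by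
    have := Nat.choose_succ_right_eq (2 * m) m
    rw [show 2 * m - m = m by omega] at this
    exact_mod_cast this
  refine mul_left_cancel₀ (by positivity : (m : ℤ) + 1 ≠ 0) ?_
  linear_combination h_catalan + h_succ

section Lucas

variable {p : ℕ} [Fact p.Prime]

theorem choose_mul_add_mul_add_modEq {a b r s : ℕ} (hr : r < p) (hs : s < p) :
    ((p * a + r).choose (p * b + s) : ℤ) ≡ r.choose s * a.choose b [ZMOD p] := by
  have hp : 0 < p := (Fact.out : p.Prime).pos
  simpa [Nat.mul_add_mod, Nat.mul_add_div hp, Nat.mod_eq_of_lt, Nat.div_eq_of_lt, hr, hs]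
    using Choose.choose_modEq_choose_mod_mul_choose_div (p := p) (n := p * a + r) (k := p * b + s)

theorem catalan_mul_add_modEq_of_two_mul_lt (n : ℕ) {k : ℕ} (hk : 2 * k < p) :
    (catalan (p * n + k) : ℤ) ≡ (2 * n).choose n * catalan k [ZMOD p] := by
  have h_two_mul : 2 * (p * n + k) = p * (2 * n) + 2 * k := by ring
  have h_central : ((2 * (p * n + k)).choose (p * n + k) : ℤ) ≡
      (2 * k).choose k * (2 * n).choose n [ZMOD p] := by
    rw [h_two_mul]
    exact choose_mul_add_mul_add_modEq hk (by omega)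
  have h_succ : ((2 * (p * n + k)).choose (p * n + k + 1) : ℤ) ≡
      (2 * k).choose (k + 1) * (2 * n).choose n [ZMOD p] := by
    have hp : 2 ≤ p := (Fact.out : p.Prime).two_le
    rw [h_two_mul, add_assoc]
    exact choose_mul_add_mul_add_modEq hk (by omega)
  rw [catalan_eq_choose_sub_choose, catalan_eq_choose_sub_choose]
  calc _ ≡ (2 * k).choose k * (2 * n).choose n - (2 * k).choose (k + 1) * (2 * n).choose n
        [ZMOD p] := h_central.sub h_succ
    _ = _ := by ring

theorem catalan_mul_add_modEq_zero (n : ℕ) {k : ℕ} (hk : p ≤ 2 * k) (hk' : k + 1 < p) :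
    (catalan (p * n + k) : ℤ) ≡ 0 [ZMOD p] := by
  have h_two_mul : 2 * (p * n + k) = p * (2 * n + 1) + (2 * k - p) := by
    have : p * (2 * n + 1) = 2 * (p * n) + p := by ring
    omega
  have h_choose (s : ℕ) (hs : s < p) (hks : 2 * k - p < s) :
      ((2 * (p * n + k)).choose (p * n + s) : ℤ) ≡ 0 [ZMOD p] := by
    rw [h_two_mul]
    simpa [Nat.choose_eq_zero_of_lt hks] using
      choose_mul_add_mul_add_modEq (a := 2 * n + 1) (b := n) (r := 2 * k - p) (by omega) hs
  rw [catalan_eq_choose_sub_choose, add_assoc]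
  simpa using (h_choose k (by omega) (by omega)).sub (h_choose (k + 1) hk' (by omega))

end Lucas

theorem catalan_lucas_low (p : ℕ) (hp : p.Prime) (n k : ℕ) (hk : k < p - 1) :
    (catalan (p * n + k) : ℤ) ≡ ((2 * n).choose n : ℤ) * (catalan k : ℤ) [ZMOD p] := by
  have : Fact p.Prime := ⟨hp⟩
  rcases lt_or_ge (2 * k) p with h_low | h_high
  · exact catalan_mul_add_modEq_of_two_mul_lt n h_low
  · have hk' : k + 1 < p := by omega
    calc (catalan (p * n + k) : ℤ) ≡ 0 [ZMOD p] := catalan_mul_add_modEq_zero n h_high hk'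
      _ = (2 * n).choose n * 0 := (mul_zero _).symm
      _ ≡ (2 * n).choose n * catalan (p * 0 + k) [ZMOD p] :=
        (catalan_mul_add_modEq_zero 0 h_high hk').symm.mul_left _
      _ = (2 * n).choose n * catalan k := by rw [mul_zero, zero_add]
end

section
/- For every prime p, the Catalan number C(p−1) = binom(2(p−1), p−1)/p satisfies C(p−1) ≡ −1 (mod p). -/
/-!
Write `C(n) = binom(2n, n) - binom(2n, n+1)`. For `n = p - 1` we have `2n = p + (p - 2)`, and
Lucas' theorem gives `binom(2n, p - 1) ≡ binom(p - 2, p - 1) = 0` and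
`binom(2n, p) ≡ binom(p - 2, 0) * binom(1, 1) = 1` modulo `p`.
-/

theorem catalan_add_choose_succ_eq_centralBinom (n : ℕ) :
    catalan n + (2 * n).choose (n + 1) = n.centralBinom := by
  have hchoose : (2 * n).choose (n + 1) * (n + 1) = n.centralBinom * n := by
    rw [Nat.choose_succ_right_eq, Nat.centralBinom, two_mul, Nat.add_sub_cancel]
  apply Nat.eq_of_mul_eq_mul_left n.succ_pos
  rw [mul_add, succ_mul_catalan_eq_centralBinom, mul_comm (n + 1), hchoose, Nat.succ_eq_add_one]
  ring

theorem catalan_eq_choose_sub_choose_succ (n : ℕ) :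
    (catalan n : ℤ) = (2 * n).choose n - (2 * n).choose (n + 1) := by
  rw [eq_sub_iff_add_eq, ← Nat.centralBinom_eq_two_mul_choose]
  exact_mod_cast catalan_add_choose_succ_eq_centralBinom n

section Lucas

variable {p : ℕ} [Fact p.Prime]

theorem choose_prime_add_modEq_zero {m k : ℕ} (hmk : m < k) (hkp : k < p) :
    ((p + m).choose k : ℤ) ≡ 0 [ZMOD p] := by
  have hmp : m < p := hmk.trans hkp
  have := Choose.choose_modEq_choose_mod_mul_choose_div (p := p) (n := p + m) (k := k)
  rw [Nat.add_mod_left, Nat.mod_eq_of_lt hmp, Nat.mod_eq_of_lt hkp,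
    Nat.choose_eq_zero_of_lt hmk] at this
  simpa using this

theorem choose_prime_add_prime_modEq_one {m : ℕ} (hmp : m < p) :
    ((p + m).choose p : ℤ) ≡ 1 [ZMOD p] := by
  have hp : 0 < p := Fact.out (p := p.Prime) |>.pos
  have := Choose.choose_modEq_choose_mod_mul_choose_div (p := p) (n := p + m) (k := p)
  rw [Nat.add_mod_left, Nat.mod_eq_of_lt hmp, Nat.mod_self, Nat.add_div_left _ hp,
    Nat.div_eq_of_lt hmp, Nat.div_self hp, Nat.choose_zero_right, Nat.choose_self] at this
  simpa using this

end Lucas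

theorem catalan_pred_prime (p : ℕ) (hp : p.Prime) :
    (catalan (p - 1) : ℤ) ≡ -1 [ZMOD p] := by
  have := Fact.mk hp
  have hp2 := hp.two_le
  have hn : 2 * (p - 1) = p + (p - 2) := by omega
  have hsucc : p - 1 + 1 = p := by omega
  have hcentral : ((p + (p - 2)).choose (p - 1) : ℤ) ≡ 0 [ZMOD p] :=
    choose_prime_add_modEq_zero (by omega) (by omega)
  have hnext : ((p + (p - 2)).choose p : ℤ) ≡ 1 [ZMOD p] :=
    choose_prime_add_prime_modEq_one (by omega)
  rw [catalan_eq_choose_sub_choose_succ, hn, hsucc]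
  simpa using hcentral.sub hnext
end

section
/- Let C(n) be the Catalan numbers and p a prime. Suppose the base-p expansion of n is such that its lowest m digits all equal p−1, the next digit is n_0 ≠ p−1, and the remaining digits are n_1, …, n_r (i.e. n = (p−1)(1+p+⋯+p^{m−1}) + p^m(n_0 + n_1 p + ⋯ + n_r p^r)). Then C(n) ≡ δ·C(n_0)·binom(2n_1,n_1)···binom(2n_r,n_r) (mod p), where δ = 1 if m = 0 and δ = −(2n_0+1) if m ≥ 1. -/
/-!
Write `n + 1 = p ^ m * (M + 1)` with `M = d₀ + p * M'`. Lucas's theorem gives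
`centralBinom (a + p * b) ≡ centralBinom a * centralBinom b` for `a < p`; since
`(M + 1) * C(M) = centralBinom M` and `d₀ + 1` is invertible mod `p`, this yields
`C(M) ≡ C(d₀) * centralBinom M'`, and iterating over the digits of `M'` gives the product.
For `m ≥ 1`, `(2n + 1) * C(n) = choose (2n + 1) (n + 1)`; as `p ^ m ∣ n + 1`, Lucas reduces this to
`choose (2M + 1) (M + 1) = (2M + 1) * C(M)`, while `2n + 1 ≡ -1`.
-/

open Finset

theorem sum_range_succ_mul_pow (p : ℕ) (d : ℕ → ℕ) (r : ℕ) :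
    ∑ i ∈ range (r + 1), d i * p ^ i = d 0 + p * ∑ i ∈ range r, d (i + 1) * p ^ i := by
  rw [sum_range_succ', mul_sum, add_comm]
  simp only [pow_succ, pow_zero, mul_one]
  congr 1
  exact sum_congr rfl fun i _ => by ring

section

variable {p : ℕ} [Fact p.Prime]

theorem choose_add_mul_cast {a c : ℕ} (b e : ℕ) (ha : a < p) (hc : c < p) :
    ((a + p * b).choose (c + p * e) : ZMod p) = a.choose c * b.choose e := by
  have hp := (Fact.out : p.Prime).pos
  have h := (ZMod.intCast_eq_intCast_iff _ _ _).mpr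
    (Choose.choose_modEq_choose_mod_mul_choose_div (n := a + p * b) (k := c + p * e) (p := p))
  push_cast at h
  rwa [Nat.add_mul_mod_self_left, Nat.add_mul_mod_self_left, Nat.add_mul_div_left _ _ hp,
    Nat.add_mul_div_left _ _ hp, Nat.mod_eq_of_lt ha, Nat.mod_eq_of_lt hc, Nat.div_eq_of_lt ha,
    Nat.div_eq_of_lt hc, zero_add, zero_add] at h

theorem choose_cast_eq_choose_div_pow_of_dvd (n : ℕ) {k m : ℕ} (h : p ^ m ∣ k) :
    (n.choose k : ZMod p) = (n / p ^ m).choose (k / p ^ m) := by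
  have hdigit : ∀ i ∈ range m, (n / p ^ i % p).choose (k / p ^ i % p) = 1 := by
    intro i hi
    have hdvd : p ^ i * p ∣ k := (pow_dvd_pow p (mem_range.mp hi)).trans h
    rw [Nat.mod_eq_zero_of_dvd (Nat.dvd_div_of_mul_dvd hdvd), Nat.choose_zero_right]
  have h := (ZMod.intCast_eq_intCast_iff _ _ _).mpr
    (Choose.choose_modEq_choose_mul_prod_range_choose (n := n) (k := k) (p := p) m)
  simpa [prod_congr rfl hdigit] using h

theorem centralBinom_add_mul_cast {a : ℕ} (b : ℕ) (ha : a < p) :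
    ((a + p * b).centralBinom : ZMod p) = a.centralBinom * b.centralBinom := by
  rw [Nat.centralBinom_eq_two_mul_choose, Nat.centralBinom_eq_two_mul_choose,
    Nat.centralBinom_eq_two_mul_choose]
  rcases lt_or_ge (2 * a) p with h | h
  · rw [show 2 * (a + p * b) = 2 * a + p * (2 * b) by ring, choose_add_mul_cast _ _ h ha]
  · -- a carry occurs in `a + a`, killing both sides
    have hcarry : ((2 * a).choose a : ZMod p) = 0 := by
      rw [ZMod.natCast_eq_zero_iff, two_mul]
      exact (Fact.out : p.Prime).dvd_choose_add ha ha (by omega)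
    rw [show 2 * (a + p * b) = (2 * a - p) + p * (2 * b + 1) by
        have : p * (2 * b + 1) = 2 * (p * b) + p := by ring
        omega,
      choose_add_mul_cast _ _ (by omega) ha, Nat.choose_eq_zero_of_lt (by omega), hcarry]
    simp

theorem centralBinom_sum_digits_cast (d : ℕ → ℕ) (r : ℕ) (hd : ∀ i < r, d i < p) :
    ((∑ i ∈ range r, d i * p ^ i).centralBinom : ZMod p) =
      ∏ i ∈ range r, ((d i).centralBinom : ZMod p) := by
  induction r generalizing d with
  | zero => simp
  | succ r ih =>
    rw [sum_range_succ_mul_pow p, centralBinom_add_mul_cast _ (hd 0 (by omega)),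
      ih _ fun i hi => hd (i + 1) (by omega), prod_range_succ']
    ring

theorem catalan_add_mul_cast {a : ℕ} (b : ℕ) (ha : a + 1 < p) :
    (catalan (a + p * b) : ZMod p) = catalan a * b.centralBinom := by
  have hunit : (a + 1 : ZMod p) ≠ 0 := by
    rw [Ne, ← Nat.cast_succ, ZMod.natCast_eq_zero_iff]
    exact Nat.not_dvd_of_pos_of_lt a.succ_pos ha
  have hcast : ((a + p * b : ℕ) : ZMod p) = a := by simp
  have key := congrArg (Nat.cast : ℕ → ZMod p) (succ_mul_catalan_eq_centralBinom (a + p * b))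
  rw [centralBinom_add_mul_cast _ (by omega), ← succ_mul_catalan_eq_centralBinom] at key
  simp only [Nat.cast_mul, Nat.cast_succ, hcast, mul_assoc] at key
  exact mul_left_cancel₀ hunit key

theorem two_mul_add_one_mul_catalan (n : ℕ) :
    (2 * n + 1) * catalan n = (2 * n + 1).choose (n + 1) := by
  apply Nat.eq_of_mul_eq_mul_left n.succ_pos
  calc (n + 1) * ((2 * n + 1) * catalan n) = (2 * n + 1) * ((n + 1) * catalan n) := by ring
    _ = (2 * n + 1).choose (n + 1) * (n + 1) := by
      rw [succ_mul_catalan_eq_centralBinom, Nat.centralBinom_eq_two_mul_choose,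
        Nat.add_one_mul_choose_eq]
    _ = (n + 1) * (2 * n + 1).choose (n + 1) := mul_comm _ _

theorem catalan_cast_of_add_one_eq_pow_mul {n m N : ℕ} (hm : m ≠ 0)
    (hn : n + 1 = p ^ m * (N + 1)) :
    (catalan n : ZMod p) = -((2 * N + 1) * catalan N) := by
  have hpos : 0 < p ^ m := pow_pos (Fact.out : p.Prime).pos m
  have hodd : 2 * n + 1 = (p ^ m - 1) + p ^ m * (2 * N + 1) := by
    have : p ^ m * (2 * N + 1) + p ^ m = 2 * (p ^ m * (N + 1)) := by ring
    omega
  have hchoose : ((2 * n + 1).choose (n + 1) : ZMod p) = (2 * N + 1).choose (N + 1) := by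
    have hk : (n + 1) / p ^ m = N + 1 := by rw [hn, Nat.mul_div_cancel_left _ hpos]
    have hq : (2 * n + 1) / p ^ m = 2 * N + 1 := by
      rw [hodd, Nat.add_mul_div_left _ _ hpos, Nat.div_eq_of_lt (by omega), zero_add]
    rw [choose_cast_eq_choose_div_pow_of_dvd _ (hn ▸ dvd_mul_right _ _), hk, hq]
  have hcast : (2 * n + 1 : ZMod p) = -1 := by
    have : ((n + 1 : ℕ) : ZMod p) = 0 := by
      rw [ZMod.natCast_eq_zero_iff, hn]
      exact (dvd_pow_self p hm).mul_right _
    push_cast at this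
    linear_combination 2 * this
  have h := congrArg (Nat.cast : ℕ → ZMod p) (two_mul_add_one_mul_catalan n)
  rw [hchoose, ← two_mul_add_one_mul_catalan] at h
  push_cast at h
  rw [hcast] at h
  linear_combination -h

end

theorem catalan_digits (p : ℕ) (hp : p.Prime) (m r : ℕ) (d : ℕ → ℕ)
    (hd : ∀ i ≤ r, d i < p) (hd0 : d 0 ≠ p - 1) (n : ℕ)
    (hn : n = (p - 1) * (∑ i ∈ Finset.range m, p ^ i) +
      p ^ m * (∑ i ∈ Finset.range (r + 1), d i * p ^ i)) :
    (catalan n : ℤ) ≡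
      (if m = 0 then 1 else -(2 * (d 0 : ℤ) + 1)) * (catalan (d 0) : ℤ) *
        ∏ i ∈ Finset.Icc 1 r, (((2 * d i).choose (d i) : ℤ)) [ZMOD p] := by
  have := Fact.mk hp
  rw [sum_range_succ_mul_pow] at hn
  set M := ∑ i ∈ range r, d (i + 1) * p ^ i
  have hd0_succ : d 0 + 1 < p := by have := hd 0 r.zero_le; omega
  have hM : (catalan (d 0 + p * M) : ZMod p) =
      catalan (d 0) * ∏ i ∈ Icc 1 r, ((2 * d i).choose (d i) : ZMod p) := by
    rw [catalan_add_mul_cast _ hd0_succ, centralBinom_sum_digits_cast _ _ fun i hi => hd (i + 1) hi,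
      ← Finset.Ico_add_one_right_eq_Icc, prod_Ico_eq_prod_range]
    simp [Nat.centralBinom_eq_two_mul_choose, add_comm 1]
  have hn1 : n + 1 = p ^ m * (d 0 + p * M + 1) := by
    have := geom_sum_mul_add (p - 1) m
    rw [Nat.sub_add_cancel hp.one_le] at this
    rw [hn, Nat.mul_succ, mul_comm]
    omega
  rw [← ZMod.intCast_eq_intCast_iff]
  push_cast
  rcases eq_or_ne m 0 with rfl | hm
  · simp only [pow_zero, one_mul, add_left_inj] at hn1
    simp [hn1, hM]
  · rw [catalan_cast_of_add_one_eq_pow_mul hm hn1, hM, if_neg hm]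
    push_cast [ZMod.natCast_self]
    ring
end

section
/- The Catalan number C(n) is divisible by 3 if and only if n+1 has a ternary digit equal to 2 in some position i ≥ 1, or (equivalently stated): C(n) ≡ (−1)^{δ*(n+1)} (mod 3) if every ternary digit of n+1 in position i ≥ 1 is 0 or 1 (where δ*(m) counts the positions i ≥ 1 with digit 1), and C(n) ≡ 0 (mod 3) otherwise. -/
/-!
By Lucas' theorem, `centralBinom (p * t + r) ≡ centralBinom r * centralBinom t [MOD p]` for a
digit `r < p` (when `2 * r ≥ p` both sides vanish), so `centralBinom q` is congruent mod `p` to the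
product of the central binomial coefficients of the base-`p` digits of `q`; for `p = 3` these are
`1`, `2 ≡ -1` and `6 ≡ 0`. The identities `(n + 1) * catalan n = centralBinom n` (when
`3 ∤ n + 1`) and `centralBinom (n + 1) = 2 * (2 * n + 1) * catalan n` (when `3 ∣ n + 1`) give
`catalan n ≡ centralBinom ((n + 1) / 3) [MOD 3]`, and the base-3 digits of `(n + 1) / 3` are
those of `n + 1` from position one on.
-/

open Nat

namespace Nat

theorem centralBinom_mul_add_modEq {p r : ℕ} [hp : Fact p.Prime] (hr : r < p) (t : ℕ) :
    centralBinom (p * t + r) ≡ centralBinom r * centralBinom t [MOD p] := by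
  have hp0 : 0 < p := hp.out.pos
  simp only [centralBinom_eq_two_mul_choose]
  refine Choose.choose_modEq_choose_mod_mul_choose_div_nat.trans ?_
  rw [mul_add_mod, mod_eq_of_lt hr, mul_add_div hp0, Nat.div_eq_of_lt hr, add_zero]
  rcases lt_or_ge (2 * r) p with hlt | hge
  · have hmod : 2 * (p * t + r) = p * (2 * t) + 2 * r := by ring
    rw [hmod, mul_add_mod, mod_eq_of_lt hlt, mul_add_div hp0, Nat.div_eq_of_lt hlt, add_zero]
  · have hmod : 2 * (p * t + r) = p * (2 * t + 1) + (2 * r - p) := by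
      zify [hge]; ring
    have hsmall : 2 * r - p < p := by omega
    rw [hmod, mul_add_mod, mod_eq_of_lt hsmall, choose_eq_zero_of_lt (by omega), zero_mul]
    have hdvd : p ∣ (2 * r).choose r := hp.out.dvd_choose hr (by omega) hge
    exact (Nat.modEq_zero_iff_dvd.2 (dvd_mul_of_dvd_left hdvd _)).symm

theorem centralBinom_modEq_prod_map_digits (p : ℕ) [hp : Fact p.Prime] (q : ℕ) :
    centralBinom q ≡ ((p.digits q).map centralBinom).prod [MOD p] := by
  induction q using Nat.strong_induction_on with
  | _ q ih =>
    rcases Nat.eq_zero_or_pos q with rfl | hq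
    · rw [digits_zero]; rfl
    · have hlt : q / p < q := Nat.div_lt_self hq hp.out.one_lt
      rw [digits_def' hp.out.one_lt hq, List.map_cons, List.prod_cons]
      calc centralBinom q = centralBinom (p * (q / p) + q % p) := by rw [div_add_mod]
        _ ≡ centralBinom (q % p) * centralBinom (q / p) [MOD p] :=
          centralBinom_mul_add_modEq (mod_lt q hp.out.pos) _
        _ ≡ _ [MOD p] := (ih _ hlt).mul_left _

theorem centralBinom_succ_eq_mul_catalan (n : ℕ) :
    centralBinom (n + 1) = 2 * (2 * n + 1) * catalan n := by
  apply Nat.eq_of_mul_eq_mul_left n.add_one_pos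
  rw [succ_mul_centralBinom_succ, ← succ_mul_catalan_eq_centralBinom]
  ring

end Nat

theorem catalan_cast_zmod_three (n : ℕ) :
    (catalan n : ZMod 3) = centralBinom ((n + 1) / 3) := by
  have step (t r : ℕ) (hr : r < 3) :
      (centralBinom (3 * t + r) : ZMod 3) = centralBinom r * centralBinom t := by
    exact_mod_cast (ZMod.natCast_eq_natCast_iff _ _ _).2 (centralBinom_mul_add_modEq hr t)
  have hlow := congrArg (Nat.cast : ℕ → ZMod 3) (succ_mul_catalan_eq_centralBinom n)
  have hhigh := congrArg (Nat.cast : ℕ → ZMod 3) (centralBinom_succ_eq_mul_catalan n)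
  obtain ⟨t, rfl | rfl | rfl⟩ : ∃ t, n = 3 * t ∨ n = 3 * t + 1 ∨ n = 3 * t + 2 := ⟨n / 3, by omega⟩
  · rw [show (3 * t + 1) / 3 = t by omega]
    rw [show 3 * t = 3 * t + 0 by rfl, step t 0 (by norm_num)] at hlow
    push_cast [centralBinom_zero] at hlow
    grind
  · rw [show (3 * t + 1 + 1) / 3 = t by omega]
    rw [step t 1 (by norm_num), show centralBinom 1 = 2 by rfl] at hlow
    push_cast at hlow
    grind
  · rw [show (3 * t + 2 + 1) / 3 = t + 1 by omega]
    rw [show 3 * t + 2 + 1 = 3 * (t + 1) + 0 by rfl, step (t + 1) 0 (by norm_num)] at hhigh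
    push_cast [centralBinom_zero] at hhigh
    grind

theorem prod_map_centralBinom_cast_zmod_three {l : List ℕ} (hl : ∀ d ∈ l, d = 0 ∨ d = 1) :
    (((l.map centralBinom).prod : ℕ) : ZMod 3) = (-1) ^ l.count 1 := by
  induction l with
  | nil => simp
  | cons d l ih =>
    simp only [List.forall_mem_cons] at hl
    rcases hl.1 with rfl | rfl
    · simp [ih hl.2]
    · rw [List.map_cons, List.prod_cons, List.count_cons_self, pow_succ, ← ih hl.2,
        show centralBinom 1 = 2 from rfl]
      push_cast
      grind

theorem three_dvd_prod_map_centralBinom {l : List ℕ} (hl : 2 ∈ l) :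
    3 ∣ (l.map centralBinom).prod :=
  (show 3 ∣ centralBinom 2 by decide).trans (List.dvd_prod (List.mem_map_of_mem hl))

theorem catalan_mod_three (n : ℕ) :
    ((∀ d ∈ (Nat.digits 3 (n + 1)).tail, d = 0 ∨ d = 1) →
      (catalan n : ℤ) ≡ (-1) ^ ((Nat.digits 3 (n + 1)).tail.count 1) [ZMOD 3]) ∧
    (¬ (∀ d ∈ (Nat.digits 3 (n + 1)).tail, d = 0 ∨ d = 1) →
      (catalan n : ℤ) ≡ 0 [ZMOD 3]) := by
  have htail : (digits 3 (n + 1)).tail = digits 3 ((n + 1) / 3) := by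
    rw [digits_def' (by norm_num) (succ_pos n)]; rfl
  have hcast : (catalan n : ZMod 3) = (((digits 3 ((n + 1) / 3)).map centralBinom).prod : ℕ) := by
    rw [catalan_cast_zmod_three]
    exact (ZMod.natCast_eq_natCast_iff _ _ _).2 (centralBinom_modEq_prod_map_digits 3 _)
  rw [htail]
  refine ⟨fun h => (ZMod.intCast_eq_intCast_iff _ _ 3).1 ?_,
    fun h => (ZMod.intCast_eq_intCast_iff _ _ 3).1 ?_⟩ <;> push_cast <;> rw [hcast]
  · exact prod_map_centralBinom_cast_zmod_three h
  · push Not at h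
    obtain ⟨d, hd, hd0, hd1⟩ := h
    obtain rfl : d = 2 := by have := digits_lt_base (by norm_num) hd; omega
    exact (ZMod.natCast_eq_zero_iff _ _).2 (three_dvd_prod_map_centralBinom hd)
end
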